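/- (Equivalent definition of the total Sobol' index, valid with independent or dependent variables.) For every nonempty u ⊆ {1,…,p}, T_u = 1 − Var(E[f | σ(x_{∼u})])/Var(f) = E[Var(f | σ(x_{∼u}))]/Var(f), where Var(f | σ(x_{∼u})) = E[f² | σ(x_{∼u})] − (E[f | σ(x_{∼u})])². -/

import Mathlib

open MeasureTheory ProbabilityTheory

/-- The sub-σ-algebra generated by the coordinates in `v`. -/
def coordSigma {p : ℕ} (Ω : Fin p → Type*) [∀ i, MeasurableSpace (Ω i)]
    (v : Finset (Fin p)) : MeasurableSpace (∀ i, Ω i) :=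
  ⨆ i ∈ v, MeasurableSpace.comap (fun x : ∀ j, Ω j => x i) inferInstance

/-- The recursively defined (generalized ANOVA) components `f_v`. -/
noncomputable def anovaComp {p : ℕ} {Ω : Fin p → Type*} [∀ i, MeasurableSpace (Ω i)]
    (μ : Measure (∀ i, Ω i)) (f : (∀ i, Ω i) → ℝ) : Finset (Fin p) → (∀ i, Ω i) → ℝ
  | v =>
    if v = ∅ then fun _ => ∫ x, f x ∂μ
    else μ[f | coordSigma Ω v] - ∑ w ∈ v.ssubsets.attach, anovaComp μ f w.1
  termination_by v => v.card
  decreasing_by exact Finset.card_lt_card (Finset.mem_ssubsets.mp w.2)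

/-- Variance (`‖f - f₀‖₂²`). -/
noncomputable def fVar {α : Type*} [MeasurableSpace α] (μ : Measure α) (f : α → ℝ) : ℝ :=
  ∫ x, (f x - ∫ y, f y ∂μ) ^ 2 ∂μ

/-- Covariance. -/
noncomputable def fCov {α : Type*} [MeasurableSpace α] (μ : Measure α) (g f : α → ℝ) : ℝ :=
  ∫ x, (g x - ∫ y, g y ∂μ) * (f x - ∫ y, f y ∂μ) ∂μ

/-- Sobol' index `S_v`. -/
noncomputable def sobolIndex {p : ℕ} {Ω : Fin p → Type*} [∀ i, MeasurableSpace (Ω i)]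
    (μ : Measure (∀ i, Ω i)) (f : (∀ i, Ω i) → ℝ) (v : Finset (Fin p)) : ℝ :=
  fCov μ (anovaComp μ f v) f / fVar μ f

/-- Total Sobol' index `T_u`. -/
noncomputable def totalSobolIndex {p : ℕ} {Ω : Fin p → Type*} [∀ i, MeasurableSpace (Ω i)]
    (μ : Measure (∀ i, Ω i)) (f : (∀ i, Ω i) → ℝ) (u : Finset (Fin p)) : ℝ :=
  ∑ v ∈ Finset.univ.powerset.filter (fun v => (v ∩ u).Nonempty), sobolIndex μ f v

/-!
Summing the components `f_v` over the subsets `v ⊆ s` telescopes to `E[f | σ(x_s)]`, and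
`Cov(E[f | 𝓜], f) = Var(E[f | 𝓜])` for every sub-σ-algebra `𝓜`. Taking `s = {1,…,p}` and
`s = ∼u`, the Sobol' indices of the subsets meeting `u` add up to
`(Var f - Var E[f | σ(x_{∼u})]) / Var f`, and the law of total variance identifies the
numerator with `E[Var(f | σ(x_{∼u}))]`.
-/

section Covariance

variable {α : Type*} {m m₀ : MeasurableSpace α} {μ : Measure[m₀] α}

lemma fVar_eq_variance {f : α → ℝ} (hf : AEMeasurable f μ) : fVar μ f = Var[f; μ] :=
  (variance_eq_integral hf).symm

lemma fCov_eq_covariance (g f : α → ℝ) : fCov μ g f = cov[g, f; μ] := rfl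

lemma integral_mul_condExp_of_stronglyMeasurable (hm : m ≤ m₀) [SigmaFinite (μ.trim hm)]
    {g f : α → ℝ} (hg : StronglyMeasurable[m] g) (hgf : Integrable (g * f) μ)
    (hf : Integrable f μ) :
    ∫ x, g x * f x ∂μ = ∫ x, g x * (μ[f | m]) x ∂μ :=
  (integral_condExp hm).symm.trans
    (integral_congr_ae (condExp_mul_of_stronglyMeasurable_left hg hgf hf))

lemma covariance_condExp_left [IsProbabilityMeasure μ] (hm : m ≤ m₀) {f : α → ℝ}
    (hf : MemLp f 2 μ) : cov[μ[f | m], f; μ] = Var[μ[f | m]; μ] := by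
  have hg : MemLp (μ[f | m]) 2 μ := hf.condExp one_le_two
  have h_pull_out : μ[μ[f | m] * f] = μ[μ[f | m] ^ 2] := by
    simpa only [Pi.mul_apply, Pi.pow_apply, sq] using
      integral_mul_condExp_of_stronglyMeasurable hm stronglyMeasurable_condExp
        (hg.integrable_mul hf) (hf.integrable one_le_two)
  rw [covariance_eq_sub hg hf, variance_eq_sub hg, integral_condExp hm, h_pull_out]
  ring

end Covariance

section Anova

variable {p : ℕ} {Ω : Fin p → Type*} [∀ i, MeasurableSpace (Ω i)] {μ : Measure (∀ i, Ω i)}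

lemma coordSigma_le (v : Finset (Fin p)) : coordSigma Ω v ≤ MeasurableSpace.pi :=
  iSup₂_le fun i _ => measurable_iff_comap_le.mp (measurable_pi_apply i)

lemma coordSigma_univ : coordSigma Ω Finset.univ = MeasurableSpace.pi := by
  simp [coordSigma, MeasurableSpace.pi]

lemma coordSigma_empty : coordSigma Ω ∅ = ⊥ := by
  simp [coordSigma]

lemma memLp_anovaComp [IsFiniteMeasure μ] {f : (∀ i, Ω i) → ℝ} (hf : MemLp f 2 μ)
    (v : Finset (Fin p)) : MemLp (anovaComp μ f v) 2 μ := by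
  induction v using Finset.strongInduction with
  | _ v ih =>
    rw [anovaComp]
    split_ifs
    · exact memLp_const _
    · exact (hf.condExp one_le_two).sub
        (memLp_finsetSum' _ fun w _ => ih w.1 (Finset.mem_ssubsets.mp w.2))

lemma sum_powerset_anovaComp [IsProbabilityMeasure μ] (f : (∀ i, Ω i) → ℝ)
    (s : Finset (Fin p)) :
    ∑ v ∈ s.powerset, anovaComp μ f v = μ[f | coordSigma Ω s] := by
  rcases s.eq_empty_or_nonempty with rfl | hs
  · rw [Finset.powerset_empty, Finset.sum_singleton, coordSigma_empty, condExp_bot,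
      anovaComp, if_pos rfl]
  · rw [← Finset.add_sum_erase _ _ (Finset.mem_powerset_self s), anovaComp, if_neg hs.ne_empty,
      Finset.sum_attach s.ssubsets]
    exact sub_add_cancel _ _

lemma sum_powerset_covariance_anovaComp [IsProbabilityMeasure μ] {f : (∀ i, Ω i) → ℝ}
    (hf : MemLp f 2 μ) (s : Finset (Fin p)) :
    ∑ v ∈ s.powerset, cov[anovaComp μ f v, f; μ] = Var[μ[f | coordSigma Ω s]; μ] := by
  rw [← covariance_sum_left' (fun v _ => memLp_anovaComp hf v) hf, sum_powerset_anovaComp,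
    covariance_condExp_left (coordSigma_le s) hf]

lemma sum_powerset_univ_covariance_anovaComp [IsProbabilityMeasure μ] {f : (∀ i, Ω i) → ℝ}
    (hf : MemLp f 2 μ) :
    ∑ v ∈ Finset.univ.powerset, cov[anovaComp μ f v, f; μ] = Var[f; μ] := by
  rw [sum_powerset_covariance_anovaComp hf, coordSigma_univ]
  exact variance_congr <|
    condExp_of_aestronglyMeasurable' le_rfl hf.aestronglyMeasurable (hf.integrable one_le_two)

lemma filter_powerset_univ_not_inter_nonempty (u : Finset (Fin p)) :
    Finset.univ.powerset.filter (fun v => ¬(v ∩ u).Nonempty) = uᶜ.powerset := by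
  ext v
  simp [Finset.not_nonempty_iff_eq_empty, ← Finset.disjoint_iff_inter_eq_empty,
    Finset.subset_compl_iff_disjoint_right]

lemma totalSobolIndex_eq_variance_sub_variance_condExp_div [IsProbabilityMeasure μ]
    {f : (∀ i, Ω i) → ℝ} (hf : MemLp f 2 μ) (u : Finset (Fin p)) :
    totalSobolIndex μ f u = (Var[f; μ] - Var[μ[f | coordSigma Ω uᶜ]; μ]) / Var[f; μ] := by
  have hsplit := Finset.sum_filter_add_sum_filter_not Finset.univ.powerset
    (fun v => (v ∩ u).Nonempty) (fun v => cov[anovaComp μ f v, f; μ])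
  rw [filter_powerset_univ_not_inter_nonempty, sum_powerset_univ_covariance_anovaComp hf,
    sum_powerset_covariance_anovaComp hf] at hsplit
  simp only [totalSobolIndex, sobolIndex, fCov_eq_covariance, fVar_eq_variance hf.aemeasurable,
    ← Finset.sum_div]
  rw [← hsplit, add_sub_cancel_right]

end Anova

theorem totalSobolIndex_eq_total_variance_form_general
    {p : ℕ} (Ω : Fin p → Type*) [∀ i, MeasurableSpace (Ω i)]
    (μ : Measure (∀ i, Ω i)) [IsProbabilityMeasure μ]
    (f : (∀ i, Ω i) → ℝ) (hf : MemLp f 2 μ)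
    (hvar : 0 < fVar μ f)
    (u : Finset (Fin p)) :
    totalSobolIndex μ f u = 1 - fVar μ (μ[f | coordSigma Ω uᶜ]) / fVar μ f ∧
    totalSobolIndex μ f u =
      (∫ x, ((μ[fun y => f y ^ 2 | coordSigma Ω uᶜ]) x - ((μ[f | coordSigma Ω uᶜ]) x) ^ 2) ∂μ)
        / fVar μ f := by
  have hm := coordSigma_le (Ω := Ω) uᶜ
  rw [fVar_eq_variance hf.aemeasurable] at hvar ⊢
  rw [fVar_eq_variance (hf.condExp one_le_two).aemeasurable,
    totalSobolIndex_eq_variance_sub_variance_condExp_div hf]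
  have h_total_variance : ∫ x, ((μ[fun y => f y ^ 2 | coordSigma Ω uᶜ]) x
      - ((μ[f | coordSigma Ω uᶜ]) x) ^ 2) ∂μ = Var[f; μ] - Var[μ[f | coordSigma Ω uᶜ]; μ] := by
    rw [← integral_condVar_add_variance_condExp hm hf, add_sub_cancel_right]
    exact integral_congr_ae (condVar_ae_eq_condExp_sq_sub_sq_condExp hm hf).symm
  exact ⟨by field_simp, by rw [h_total_variance]⟩

/-- Equivalent definition of the total Sobol' index (independent or dependent variables):
`T_u = 1 - Var(E[f|σ(x_{∼u})])/Var(f) = E[Var(f|σ(x_{∼u}))]/Var(f)`, where the conditional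
variance is `Var(f|σ(x_{∼u})) = E[f²|σ(x_{∼u})] - (E[f|σ(x_{∼u})])²`. -/
theorem totalSobolIndex_eq_total_variance_form
    {p : ℕ} (hp : 1 ≤ p) (Ω : Fin p → Type*) [∀ i, MeasurableSpace (Ω i)]
    (μ : Measure (∀ i, Ω i)) [IsProbabilityMeasure μ]
    (f : (∀ i, Ω i) → ℝ) (hf : MemLp f 2 μ)
    (hvar : 0 < fVar μ f)
    (u : Finset (Fin p)) (hu : u.Nonempty) :
    totalSobolIndex μ f u = 1 - fVar μ (μ[f | coordSigma Ω uᶜ]) / fVar μ f ∧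
    totalSobolIndex μ f u =
      (∫ x, ((μ[fun y => f y ^ 2 | coordSigma Ω uᶜ]) x - ((μ[f | coordSigma Ω uᶜ]) x) ^ 2) ∂μ)
        / fVar μ f :=
  totalSobolIndex_eq_total_variance_form_general Ω μ f hf hvar u
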